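/- There is a universal constant C > 0 with the following property. Let ε ∈ (0,1), let n, c ≥ 1, and for each i ∈ {1,…,n}, j ∈ {0,…,c} let p_{i,j} ∈ [1−ε, 1], λ_{i,j} ≥ 0, and z_{i,j} ∈ [0,1] with Σ_{j=0}^{c} z_{i,j} = 1 for each i. Let r be a bijection from {1,…,n(c+1)} to the index pairs such that λ_{r(1)} ≥ λ_{r(2)} ≥ … ≥ λ_{r(n(c+1))}. For x ∈ [0,1]^{n×(c+1)} define Obj(x) = Σ_{ℓ=1}^{n(c+1)} λ_{r(ℓ)}·(∏_{ℓ'=1}^{ℓ−1} p_{r(ℓ')}^{x_{r(ℓ')}} − ∏_{ℓ'=1}^{ℓ} p_{r(ℓ')}^{x_{r(ℓ')}}). Let J_1, …, J_n be independent random variables with P[J_i = j] = z_{i,j}, and set Z_{i,j} = 1{J_i = j}. Then E[Obj(Z)] ≥ (1 − Cε)·Obj(z). -/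

import Mathlib

/-!
With `C = 1`. Write `P_m(x) = ∏_{ℓ ≤ m} p_{r(ℓ)}^{x_{r(ℓ)}}` for the prefix products. Summation by
parts turns `Obj(x)` into a combination of the numbers `1 - P_m(x)` with the nonnegative weights
`λ_{r(m)} - λ_{r(m+1)}`, so it suffices to show `1 - E[P_m(Z)] ≥ (1 - ε)(1 - P_m(z))` for every
prefix. By independence `E[P_m(Z)] = ∏_i ∑_j z_{ij} g_{ij}`, where `g_{ij}` is `p_{ij}` on the
prefix and `1` off it. Because `e^{g-1} ≤ g^{1-ε}` for `g ∈ [1-ε, 1]`, each factor satisfies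
`∑_j z_{ij} g_{ij} ≤ exp(∑_j z_{ij}(g_{ij} - 1)) ≤ (∏_j g_{ij}^{z_{ij}})^{1-ε}`, hence
`E[P_m(Z)] ≤ P_m(z)^{1-ε} ≤ 1 - (1 - ε)(1 - P_m(z))` by Bernoulli's inequality.
-/

open MeasureTheory ProbabilityTheory

noncomputable section

/-- The objective of the convex-programming relaxation of the threshold-assignment problem:
`Obj(x) = Σ_ℓ λ_{r(ℓ)}·(∏_{ℓ'<ℓ} p_{r(ℓ')}^{x_{r(ℓ')}} − ∏_{ℓ'≤ℓ} p_{r(ℓ')}^{x_{r(ℓ')}})`,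
where `r` enumerates the variable/threshold pairs in nonincreasing order of `λ` and
`p^x = exp(x·log p)` is the real power. -/
def roundingObj {n c : ℕ} (p lam : Fin n × Fin (c + 1) → ℝ)
    (r : Fin (n * (c + 1)) ≃ Fin n × Fin (c + 1))
    (x : Fin n × Fin (c + 1) → ℝ) : ℝ :=
  ∑ l : Fin (n * (c + 1)), lam (r l) *
    ((∏ l' ∈ Finset.Iio l, p (r l') ^ x (r l')) - ∏ l' ∈ Finset.Iic l, p (r l') ^ x (r l'))

section Measurability

variable {Ω : Type*} [MeasurableSpace Ω] {μ : Measure Ω}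

theorem nullMeasurableSet_of_measure_add_measure_compl_le [IsFiniteMeasure μ] {s : Set Ω}
    (h : μ s + μ sᶜ ≤ μ Set.univ) : NullMeasurableSet s μ := by
  set H := toMeasurable μ s
  set H' := toMeasurable μ sᶜ
  have hH' : MeasurableSet H' := measurableSet_toMeasurable μ sᶜ
  have hcover : H ∪ H' = Set.univ :=
    Set.eq_univ_of_subset (Set.union_subset_union (subset_toMeasurable μ s)
      (subset_toMeasurable μ sᶜ)) (Set.union_compl_self s)
  have hoverlap : μ (H ∩ H') = 0 := by
    have key := measure_union_add_inter (μ := μ) H hH'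
    rw [hcover, measure_toMeasurable, measure_toMeasurable] at key
    have hle : μ Set.univ + μ (H ∩ H') ≤ μ Set.univ + 0 := by rwa [add_zero, key]
    exact (ENNReal.add_right_inj (measure_ne_top μ _)).1 (le_antisymm hle (by simp))
  have hsub : H \ H' ⊆ s := fun ω hω => by
    by_contra hs
    exact hω.2 (subset_toMeasurable μ sᶜ hs)
  have hmeas : MeasurableSet (H \ H') := (measurableSet_toMeasurable μ s).diff hH'
  refine (hmeas.nullMeasurableSet.congr (ae_eq_of_subset_of_measure_ge hsub ?_
    hmeas.nullMeasurableSet (measure_ne_top μ _)))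
  rw [← Set.sdiff_inter_self_eq_sdiff, measure_sdiff_null (Set.inter_comm H H' ▸ hoverlap),
    measure_toMeasurable]

theorem aemeasurable_of_sum_measureReal_preimage_singleton_le {κ : Type*} [Fintype κ]
    [MeasurableSpace κ] [MeasurableSingletonClass κ] [IsFiniteMeasure μ] {X : Ω → κ}
    (h : ∑ k, μ.real (X ⁻¹' {k}) ≤ μ.real Set.univ) : AEMeasurable X μ := by
  classical
  have hfin : ∀ k ∈ Finset.univ, μ (X ⁻¹' {k}) ≠ ⊤ := fun k _ => measure_ne_top μ _
  replace h : ∑ k, μ (X ⁻¹' {k}) ≤ μ Set.univ :=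
    (ENNReal.toReal_le_toReal (ENNReal.sum_ne_top.2 hfin) (measure_ne_top μ _)).1
      (by rwa [ENNReal.toReal_sum hfin])
  refine NullMeasurable.aemeasurable fun t _ => ?_
  rw [← Set.biUnion_preimage_singleton]
  refine .biUnion t.to_countable fun k _ => nullMeasurableSet_of_measure_add_measure_compl_le ?_
  calc μ (X ⁻¹' {k}) + μ (X ⁻¹' {k})ᶜ
      ≤ μ (X ⁻¹' {k}) + ∑ k' ∈ Finset.univ.erase k, μ (X ⁻¹' {k'}) := by
        gcongr
        refine (measure_mono fun ω hω => ?_).trans (measure_biUnion_finset_le _ _)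
        exact Set.mem_biUnion (Finset.mem_erase.2 ⟨hω, Finset.mem_univ _⟩) rfl
    _ = ∑ k', μ (X ⁻¹' {k'}) :=
        Finset.add_sum_erase _ (fun k' => μ (X ⁻¹' {k'})) (Finset.mem_univ k)
    _ ≤ μ Set.univ := h

end Measurability

section Integration

variable {Ω : Type*} [MeasurableSpace Ω] {μ : Measure Ω} [IsFiniteMeasure μ]
  {β : Type*} [Fintype β] [MeasurableSpace β] [DiscreteMeasurableSpace β]

theorem integrable_comp_of_fintype {X : Ω → β} (hX : AEMeasurable X μ)
    (g : β → ℝ) : Integrable (fun ω => g (X ω)) μ :=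
  Integrable.of_finite.comp_aemeasurable hX

theorem integral_comp_eq_sum_measureReal {X : Ω → β} (hX : AEMeasurable X μ) (g : β → ℝ) :
    ∫ ω, g (X ω) ∂μ = ∑ b, μ.real (X ⁻¹' {b}) * g b := by
  rw [← integral_map hX Measurable.of_discrete.aestronglyMeasurable,
    integral_fintype Integrable.of_finite]
  simp_rw [map_measureReal_apply_of_aemeasurable hX (measurableSet_singleton _), smul_eq_mul]

theorem ProbabilityTheory.iIndepFun.integral_prod_comp_eq_prod_sum {ι : Type*} [Fintype ι]
    {J : ι → Ω → β} (hJ : iIndepFun J μ) (hJm : ∀ i, AEMeasurable (J i) μ) (f : ι → β → ℝ) :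
    ∫ ω, ∏ i, f i (J i ω) ∂μ = ∏ i, ∑ b, μ.real (J i ⁻¹' {b}) * f i b := by
  rw [hJ.integral_fun_prod_comp hJm fun i => Measurable.of_discrete.aestronglyMeasurable]
  exact Finset.prod_congr rfl fun i _ => integral_comp_eq_sum_measureReal (hJm i) (f i)

end Integration

theorem Finset.prod_rpow_ite_eq_prod_ite {ι κ : Type*} [Fintype ι] [DecidableEq ι]
    [DecidableEq κ] (T : Finset (ι × κ)) (p : ι × κ → ℝ) (y : ι → κ) :
    ∏ q ∈ T, p q ^ (if y q.1 = q.2 then (1 : ℝ) else 0) =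
      ∏ i, if (i, y i) ∈ T then p (i, y i) else 1 := by
  have hrpow : ∀ q : ι × κ, p q ^ (if y q.1 = q.2 then (1 : ℝ) else 0) =
      if y q.1 = q.2 then p q else 1 := fun q => by split_ifs <;> simp
  simp_rw [hrpow]
  rw [← Finset.prod_filter, ← Finset.prod_filter]
  refine Finset.prod_nbij' Prod.fst (fun i => (i, y i)) ?_ ?_ ?_ ?_ ?_ <;>
    simp +contextual

namespace Real

theorem exp_sub_one_le_rpow_one_sub {ε x : ℝ} (hε : ε < 1) (hx : x ∈ Set.Icc (1 - ε) 1) :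
    exp (x - 1) ≤ x ^ (1 - ε) := by
  have hx0 : 0 < x := by linarith [hx.1]
  rw [rpow_def_of_pos hx0, exp_le_exp]
  have hlog : 1 - x⁻¹ ≤ log x := one_sub_inv_le_log_of_pos hx0
  have hlog0 : log x ≤ 0 := log_nonpos hx0.le hx.2
  have hx1 : x * (1 - x⁻¹) = x - 1 := by field_simp
  nlinarith [hx.1]

theorem arith_mean_weighted_le_geom_mean_weighted_rpow {κ : Type*} {ε : ℝ} (hε : ε < 1)
    (s : Finset κ) (z g : κ → ℝ) (hz : ∀ k ∈ s, 0 ≤ z k) (hzs : ∑ k ∈ s, z k = 1)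
    (hg : ∀ k ∈ s, g k ∈ Set.Icc (1 - ε) 1) :
    ∑ k ∈ s, z k * g k ≤ (∏ k ∈ s, g k ^ z k) ^ (1 - ε) := by
  have hg0 : ∀ k ∈ s, 0 ≤ g k := fun k hk => by linarith [(hg k hk).1]
  calc ∑ k ∈ s, z k * g k = ∑ k ∈ s, z k * (g k - 1) + 1 := by
        simp only [mul_sub, mul_one, Finset.sum_sub_distrib, hzs, sub_add_cancel]
    _ ≤ exp (∑ k ∈ s, z k * (g k - 1)) := add_one_le_exp _
    _ = ∏ k ∈ s, exp (g k - 1) ^ z k := by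
        rw [exp_sum]
        exact Finset.prod_congr rfl fun k _ => by rw [← exp_mul, mul_comm]
    _ ≤ ∏ k ∈ s, (g k ^ (1 - ε)) ^ z k :=
        Finset.prod_le_prod (fun k _ => by positivity) fun k hk =>
          rpow_le_rpow (exp_pos _).le (exp_sub_one_le_rpow_one_sub hε (hg k hk)) (hz k hk)
    _ = (∏ k ∈ s, g k ^ z k) ^ (1 - ε) := by
        rw [← finsetProd_rpow _ _ fun k hk => rpow_nonneg (hg0 k hk) _]
        exact Finset.prod_congr rfl fun k hk => by
          rw [← rpow_mul (hg0 k hk), ← rpow_mul (hg0 k hk), mul_comm]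

end Real

theorem integral_prod_rpow_indicator_le {Ω : Type*} [MeasurableSpace Ω] {μ : Measure Ω}
    [IsProbabilityMeasure μ] {ι κ : Type*} [Fintype ι] [Fintype κ] [DecidableEq κ]
    [MeasurableSpace κ] [DiscreteMeasurableSpace κ] {ε : ℝ} (hε0 : 0 ≤ ε) (hε : ε < 1)
    {p z : ι × κ → ℝ} (hp : ∀ q, p q ∈ Set.Icc (1 - ε) 1) (hz : ∀ q, 0 ≤ z q)
    (hzsum : ∀ i, ∑ k, z (i, k) = 1) {J : ι → Ω → κ} (hJ : iIndepFun J μ)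
    (hJm : ∀ i, AEMeasurable (J i) μ) (hmarg : ∀ i k, μ.real (J i ⁻¹' {k}) = z (i, k))
    (T : Finset (ι × κ)) :
    ∫ ω, ∏ q ∈ T, p q ^ (if J q.1 ω = q.2 then (1 : ℝ) else 0) ∂μ ≤
      (∏ q ∈ T, p q ^ z q) ^ (1 - ε) := by
  classical
  set g : ι × κ → ℝ := fun q => if q ∈ T then p q else 1
  have hg : ∀ q, g q ∈ Set.Icc (1 - ε) 1 := fun q => by
    by_cases hq : q ∈ T
    · simpa [g, hq] using hp q
    · simp [g, hq, hε0]
  have hprod (ω : Ω) := Finset.prod_rpow_ite_eq_prod_ite T p (fun i => J i ω)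
  simp_rw [hprod]
  rw [hJ.integral_prod_comp_eq_prod_sum hJm fun i k => if (i, k) ∈ T then p (i, k) else 1]
  simp_rw [hmarg]
  calc ∏ i, ∑ k, z (i, k) * (if (i, k) ∈ T then p (i, k) else 1)
      ≤ ∏ i, (∏ k, g (i, k) ^ z (i, k)) ^ (1 - ε) := by
        refine Finset.prod_le_prod (fun i _ => Finset.sum_nonneg fun k _ => ?_) fun i _ => ?_
        · exact mul_nonneg (hz _) (by linarith [(hg (i, k)).1, hε])
        · exact Real.arith_mean_weighted_le_geom_mean_weighted_rpow hε _ (fun k => z (i, k))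
            (fun k => g (i, k)) (fun k _ => hz _) (hzsum i) fun k _ => hg (i, k)
    _ = (∏ q, g q ^ z q) ^ (1 - ε) := by
        rw [Real.finsetProd_rpow _ _ fun i _ => Finset.prod_nonneg fun k _ =>
          Real.rpow_nonneg (by linarith [(hg (i, k)).1]) _, Fintype.prod_prod_type]
    _ = (∏ q ∈ T, p q ^ z q) ^ (1 - ε) := by
        rw [← Finset.prod_subset (Finset.subset_univ T) fun q _ hq => by simp [g, hq]]
        exact congrArg (· ^ (1 - ε)) (Finset.prod_congr rfl fun q hq => by simp [g, hq])

theorem mul_sum_range_le_sum_range_of_antitone {Λ A B : ℕ → ℝ} {κ : ℝ} (hΛ : Antitone Λ)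
    (hAB : ∀ m, κ * (B 0 - B m) ≤ A 0 - A m) (N : ℕ) (hΛN : 0 ≤ Λ N) :
    κ * ∑ m ∈ Finset.range N, Λ m * (B m - B (m + 1)) ≤
      ∑ m ∈ Finset.range N, Λ m * (A m - A (m + 1)) := by
  set d : ℕ → ℝ := fun m => (A 0 - A m) - κ * (B 0 - B m)
  have hd : ∀ m, 0 ≤ d m := fun m => sub_nonneg.2 (hAB m)
  -- summation by parts: the partial sums `d` are nonnegative and the weights decrease
  have abel : ∀ N, Λ N * d N ≤ ∑ m ∈ Finset.range N, Λ m * (d (m + 1) - d m) := by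
    intro N
    induction N with
    | zero => simp [d]
    | succ N ih =>
      rw [Finset.sum_range_succ]
      nlinarith [mul_le_mul_of_nonneg_right (hΛ N.le_succ) (hd (N + 1))]
  have hsum : ∑ m ∈ Finset.range N, Λ m * (d (m + 1) - d m) =
      ∑ m ∈ Finset.range N, Λ m * (A m - A (m + 1)) -
        κ * ∑ m ∈ Finset.range N, Λ m * (B m - B (m + 1)) := by
    rw [Finset.mul_sum, ← Finset.sum_sub_distrib]
    exact Finset.sum_congr rfl fun m _ => by ring
  linarith [abel N, mul_nonneg hΛN (hd N)]

def prefixSet {N : ℕ} {α : Type*} (r : Fin N ≃ α) (m : ℕ) : Finset α :=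
  ({l | (l : ℕ) < m} : Finset (Fin N)).map r.toEmbedding

@[simp]
theorem prefixSet_zero {N : ℕ} {α : Type*} (r : Fin N ≃ α) : prefixSet r 0 = ∅ := by
  simp [prefixSet]

def extendByZero {N : ℕ} {M : Type*} [Zero M] (w : Fin N → M) (m : ℕ) : M :=
  if h : m < N then w ⟨m, h⟩ else 0

theorem extendByZero_self {N : ℕ} {M : Type*} [Zero M] (w : Fin N → M) : extendByZero w N = 0 :=
  dif_neg (lt_irrefl N)

theorem antitone_extendByZero {N : ℕ} {M : Type*} [Zero M] [Preorder M] {w : Fin N → M}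
    (hw : Antitone w) (hw0 : 0 ≤ w) :
    Antitone (extendByZero w) := by
  intro a b hab
  unfold extendByZero
  split_ifs with hb ha ha
  · exact hw (Fin.mk_le_mk.2 hab)
  · omega
  · exact hw0 _
  · exact le_rfl

section Objective

variable {n c : ℕ} (p lam : Fin n × Fin (c + 1) → ℝ) (r : Fin (n * (c + 1)) ≃ Fin n × Fin (c + 1))

theorem roundingObj_eq_sum_range (x : Fin n × Fin (c + 1) → ℝ) :
    roundingObj p lam r x = ∑ m ∈ Finset.range (n * (c + 1)), extendByZero (lam ∘ r) m *
      (∏ q ∈ prefixSet r m, p q ^ x q - ∏ q ∈ prefixSet r (m + 1), p q ^ x q) := by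
  rw [← Fin.sum_univ_eq_sum_range]
  refine Finset.sum_congr rfl fun l _ => ?_
  simp [extendByZero, prefixSet, Finset.filter_gt_eq_Iio, Finset.filter_ge_eq_Iic]

theorem integral_roundingObj {Ω : Type*} [MeasurableSpace Ω] {μ : Measure Ω}
    {x : Ω → Fin n × Fin (c + 1) → ℝ}
    (hx : ∀ m, Integrable (fun ω => ∏ q ∈ prefixSet r m, p q ^ x ω q) μ) :
    ∫ ω, roundingObj p lam r (x ω) ∂μ = ∑ m ∈ Finset.range (n * (c + 1)),
      extendByZero (lam ∘ r) m * (∫ ω, ∏ q ∈ prefixSet r m, p q ^ x ω q ∂μ -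
        ∫ ω, ∏ q ∈ prefixSet r (m + 1), p q ^ x ω q ∂μ) := by
  simp_rw [roundingObj_eq_sum_range]
  rw [integral_finsetSum _ fun m _ => ?_]
  · exact Finset.sum_congr rfl fun m _ => by
      rw [integral_const_mul, integral_sub (hx m) (hx (m + 1))]
  · exact ((hx m).sub (hx (m + 1))).const_mul _

end Objective

/-- **Randomized rounding** (Lemma 15 of the paper): there is a universal constant `C > 0`
such that for every `ε ∈ (0,1)`, every fractional assignment `z` of variables to thresholds
(with all `p_{i,j} ∈ [1−ε,1]`, `λ` nonnegative and sorted by the bijection `r`), and every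
independent randomized rounding `J` of `z` (with `P[J_i = j] = z_{i,j}` and
`Z_{i,j} = 1{J_i = j}`), one has `E[Obj(Z)] ≥ (1 − Cε)·Obj(z)`. -/
theorem randomized_rounding :
    ∃ C : ℝ, 0 < C ∧
      ∀ ε : ℝ, ε ∈ Set.Ioo (0:ℝ) 1 →
      ∀ n c : ℕ, 0 < n → 0 < c →
      ∀ p lam : Fin n × Fin (c + 1) → ℝ,
        (∀ q, p q ∈ Set.Icc (1 - ε) 1) →
        (∀ q, 0 ≤ lam q) →
      ∀ z : Fin n × Fin (c + 1) → ℝ,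
        (∀ q, z q ∈ Set.Icc (0:ℝ) 1) →
        (∀ i : Fin n, ∑ j : Fin (c + 1), z (i, j) = 1) →
      ∀ r : Fin (n * (c + 1)) ≃ Fin n × Fin (c + 1),
        (∀ a b : Fin (n * (c + 1)), a ≤ b → lam (r b) ≤ lam (r a)) →
      ∀ (Ω : Type) (_ : MeasurableSpace Ω) (μ : Measure Ω), IsProbabilityMeasure μ →
      ∀ J : Fin n → Ω → Fin (c + 1),
        @iIndepFun _ _ _ _ (fun _ => (⊤ : MeasurableSpace (Fin (c + 1)))) J μ →
        (∀ i j, (μ {ω | J i ω = j}).toReal = z (i, j)) →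
        (1 - C * ε) * roundingObj p lam r z ≤
          ∫ ω, roundingObj p lam r (fun q => if J q.1 ω = q.2 then 1 else 0) ∂μ := by
  refine ⟨1, one_pos, ?_⟩
  rintro ε ⟨hε0, hε1⟩ n c - - p lam hp hlam z hz hzsum r hsort Ω _ μ _ J hJ hmarg
  have hmarg' : ∀ i k, μ.real (J i ⁻¹' {k}) = z (i, k) := hmarg
  -- `J` is not assumed measurable: marginals summing to one make it a.e. measurable
  have hJm : ∀ i, AEMeasurable (J i) μ := fun i =>
    aemeasurable_of_sum_measureReal_preimage_singleton_le (by simp [hmarg', hzsum])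
  have hint : ∀ m, Integrable (fun ω => ∏ q ∈ prefixSet r m,
      p q ^ (if J q.1 ω = q.2 then (1 : ℝ) else 0)) μ := fun m =>
    integrable_comp_of_fintype (aemeasurable_pi_lambda (fun ω i => J i ω) hJm)
      fun y => ∏ q ∈ prefixSet r m, p q ^ (if y q.1 = q.2 then (1 : ℝ) else 0)
  rw [one_mul, roundingObj_eq_sum_range, integral_roundingObj p lam r hint]
  refine mul_sum_range_le_sum_range_of_antitone (antitone_extendByZero hsort fun l => hlam (r l))
    (fun m => ?_) _ (extendByZero_self _).ge
  have hA := integral_prod_rpow_indicator_le hε0.le hε1 hp (fun q => (hz q).1) hzsum hJ hJm hmarg'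
    (prefixSet r m)
  set B := ∏ q ∈ prefixSet r m, p q ^ z q
  have hB0 : 0 ≤ B := Finset.prod_nonneg fun q _ => Real.rpow_nonneg (by linarith [(hp q).1]) _
  have hB := rpow_one_add_le_one_add_mul_self (s := B - 1) (by linarith) (p := 1 - ε)
    (by linarith) (by linarith)
  rw [add_sub_cancel] at hB
  simp only [prefixSet_zero, Finset.prod_empty, integral_const, probReal_univ, smul_eq_mul,
    mul_one]
  linarith
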